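/- arXiv:2307.09726 — 8 statements merged into one kernel-verified Lean document; each statement's English description precedes it below -/
import Mathlib

section
/- Let m < M be reals, u ∈ ℝ^N, A a k×N real matrix with A Aᵀ invertible, A⁺ = Aᵀ(A Aᵀ)⁻¹, b ∈ ℝ^k, α, γ > 0, c = 1/(γα+1), and λ ∈ ℝ. Let x̂ ∈ ℝ^N satisfy m ≤ x̂ᵢ ≤ M for all i, and let D be the N×N diagonal 0/1 matrix with Dᵢᵢ = 1 if x̂ᵢ ∈ {m, M} and Dᵢᵢ = 0 otherwise. Suppose y, y' ∈ ℝ^N satisfy, for each index i: yᵢ ≥ M and y'ᵢ ≥ M if x̂ᵢ = M; m ≤ yᵢ ≤ M and m ≤ y'ᵢ ≤ M if m < x̂ᵢ < M; and yᵢ ≤ m and y'ᵢ ≤ m if x̂ᵢ = m. Then T_γ(y) − T_γ(y') = T_{c,λ}·(y − y'), where T_{c,λ} = λ·[c·(I − A⁺A)(I − D) + c·A⁺A·D + (1−c)·D] + (1−λ)·I. -/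
/-- The clipping (cut-off) operator `S`, `(S y)ᵢ = min (max yᵢ m) M`. -/
noncomputable def clip {N : ℕ} (m M : ℝ) (y : Fin N → ℝ) : Fin N → ℝ :=
  fun i => min (max (y i) m) M

/-- The projection operator `P(y) = A⁺(b - A y) + y` with `A⁺ = Aᵀ(AAᵀ)⁻¹`. -/
noncomputable def proj {N k : ℕ} (A : Matrix (Fin k) (Fin N) ℝ) (b : Fin k → ℝ)
    (y : Fin N → ℝ) : Fin N → ℝ :=
  (A.transpose * (A * A.transpose)⁻¹).mulVec (b - A.mulVec y) + y

/-- The generalized Douglas–Rachford operator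
`T_γ(y) = λ [c P(2 S(y) - y) + (1 - c) u] + y - λ S(y)`. -/
noncomputable def DRop {N k : ℕ} (m M : ℝ) (A : Matrix (Fin k) (Fin N) ℝ)
    (b : Fin k → ℝ) (u : Fin N → ℝ) (c lam : ℝ) (y : Fin N → ℝ) : Fin N → ℝ :=
  lam • (c • proj A b ((2 : ℝ) • clip m M y - y) + (1 - c) • u) + y - lam • clip m M y

/-- In the asymptotic regime, the generalized Douglas–Rachford operator acts
linearly: `T_γ(y) - T_γ(y') = T_{c,λ} (y - y')` where
`T_{c,λ} = λ[c(I - A⁺A)(I - D) + c A⁺A D + (1-c) D] + (1-λ) I`. -/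
theorem stmt5 {N k : ℕ} (m M : ℝ) (hmM : m < M) (u : Fin N → ℝ)
    (A : Matrix (Fin k) (Fin N) ℝ) (hA : IsUnit (A * A.transpose))
    (b : Fin k → ℝ) (α γ : ℝ) (hα : 0 < α) (hγ : 0 < γ)
    (c lam : ℝ) (hc : c = 1 / (γ * α + 1))
    (xhat : Fin N → ℝ) (hx : ∀ i, m ≤ xhat i ∧ xhat i ≤ M)
    (D : Matrix (Fin N) (Fin N) ℝ)
    (hD : D = Matrix.diagonal (fun i => if xhat i = m ∨ xhat i = M then (1 : ℝ) else 0))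
    (y y' : Fin N → ℝ)
    (h1 : ∀ i, xhat i = M → M ≤ y i ∧ M ≤ y' i)
    (h2 : ∀ i, m < xhat i → xhat i < M →
      (m ≤ y i ∧ y i ≤ M) ∧ (m ≤ y' i ∧ y' i ≤ M))
    (h3 : ∀ i, xhat i = m → y i ≤ m ∧ y' i ≤ m)
    (Tcl : Matrix (Fin N) (Fin N) ℝ)
    (hT : Tcl = lam • (c • ((1 - A.transpose * (A * A.transpose)⁻¹ * A) * (1 - D))
        + c • (A.transpose * (A * A.transpose)⁻¹ * A * D) + (1 - c) • D)
      + (1 - lam) • (1 : Matrix (Fin N) (Fin N) ℝ)) :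
    DRop m M A b u c lam y - DRop m M A b u c lam y' = Tcl.mulVec (y - y') := by
  -- Step 1: clip difference is (I - D)(y - y')
  have hS : clip m M y = clip m M y' + ((y - y') - D.mulVec (y - y')) := by
    funext i
    simp only [Pi.add_apply, Pi.sub_apply, hD, Matrix.mulVec_diagonal, clip]
    by_cases h : xhat i = m ∨ xhat i = M
    · rw [if_pos h, one_mul]
      have : min (max (y i) m) M = min (max (y' i) m) M := by
        rcases h with h | h
        · obtain ⟨hy, hy'⟩ := h3 i h
          rw [max_eq_right hy, max_eq_right hy']
        · obtain ⟨hy, hy'⟩ := h1 i h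
          rw [max_eq_left (le_trans hmM.le hy), max_eq_left (le_trans hmM.le hy'),
              min_eq_right hy, min_eq_right hy']
      rw [this]; ring
    · push_neg at h
      obtain ⟨hm, hM⟩ := h
      obtain ⟨⟨hy1, hy2⟩, hy'1, hy'2⟩ :=
        h2 i (lt_of_le_of_ne (hx i).1 (Ne.symm hm)) (lt_of_le_of_ne (hx i).2 hM)
      rw [if_neg (by push_neg; exact ⟨hm, hM⟩), zero_mul]
      rw [max_eq_left hy1, max_eq_left hy'1, min_eq_left hy2, min_eq_left hy'2]
      ring
  -- Step 2: linear algebra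
  rw [hT]
  simp only [DRop, proj, hS]
  simp only [Matrix.sub_mul, Matrix.mul_sub, Matrix.mul_one, Matrix.one_mul,
    Matrix.add_mulVec, Matrix.sub_mulVec, Matrix.smul_mulVec, Matrix.one_mulVec,
    ← Matrix.mulVec_mulVec, Matrix.mulVec_add, Matrix.mulVec_sub, Matrix.mulVec_smul,
    smul_add, smul_sub]
  module
end

section
/- Let N ≥ 2 and let S ⊆ {1, …, N} with r = |S| and 1 ≤ r ≤ N−1. Let D be the N×N diagonal 0/1 matrix with Dᵢᵢ = 1 iff i ∈ S, let J be the N×N all-ones matrix, and let I be the N×N identity matrix. Then the characteristic polynomial of the matrix M = (I − J/N)(I − D) is det(X·I − M) = X^r · (X − 1)^{N−r−1} · (X − r/N). -/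
/-!
With `T = Sᶜ` and `E : Matrix T (Fin N) ℝ` the coordinate selector, `I - D = Eᵀ E`, so
`charpoly ((P Eᵀ) E) = X ^ (N - |T|) * charpoly (E P Eᵀ)` with `P = I - J/N`. The compression
`E P Eᵀ = I - (1/N) 𝟙 𝟙ᵀ` is a rank-one perturbation of the identity on `T`: it has eigenvalue `1`
with multiplicity `|T| - 1` and eigenvalue `1 - |T|/N = r/N`.
-/

open Polynomial Matrix

namespace Matrix

variable {n R : Type*} [Fintype n] [DecidableEq n] [CommRing R]

theorem charpoly_one_sub_vecMulVec [Nonempty n] (u v : n → R) :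
    (1 - vecMulVec u v).charpoly = (X - 1) ^ (Fintype.card n - 1) * (X - C (1 - u ⬝ᵥ v)) := by
  have hshift : 1 - vecMulVec u v = vecMulVec (-u) v - scalar n (-1 : R) := by
    rw [neg_vecMulVec, map_neg, scalar_apply, diagonal_one]; abel
  obtain ⟨k, hk⟩ : ∃ k, Fintype.card n = k + 1 :=
    Nat.exists_eq_succ_of_ne_zero Fintype.card_ne_zero
  rw [hshift, charpoly_sub_scalar, charpoly_vecMulVec, hk, Nat.add_sub_cancel, neg_dotProduct]
  simp only [smul_eq_C_mul, sub_comp, neg_comp, mul_comp, pow_comp, X_comp, C_comp, map_neg,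
    map_sub, C_1]
  ring

theorem charpoly_mul_diagonal_indicator (A : Matrix n n R) (s : Finset n) :
    (A * diagonal fun i => if i ∈ s then 1 else 0).charpoly
      = X ^ (Fintype.card n - s.card) * (A.submatrix ((↑) : s → n) (↑)).charpoly := by
  set E : Matrix s n R := (1 : Matrix n n R).submatrix (↑) id
  have hEE : (diagonal fun i => if i ∈ s then 1 else 0) = Eᵀ * E := by
    ext i j
    change _ = ∑ k : s, (1 : Matrix n n R) k i * (1 : Matrix n n R) k j
    rw [Finset.sum_coe_sort s (fun k : n => (1 : Matrix n n R) k i * (1 : Matrix n n R) k j)]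
    by_cases hij : i = j
    · subst hij; by_cases hi : i ∈ s <;> simp [one_apply, hi]
    · simp [one_apply, hij, Ne.symm hij]
  have hEAE : E * (A * Eᵀ) = A.submatrix (↑) (↑) := by
    ext i j
    simp [E, mul_apply, one_apply]
  rw [hEE, ← Matrix.mul_assoc, charpoly_mul_comm_of_le _ _ (by simpa using s.card_le_univ),
    hEAE, Fintype.card_coe]

end Matrix

theorem stmt6_general {N : ℕ} (hN : 2 ≤ N) (S : Finset (Fin N)) (r : ℕ) (hr : r = S.card)
    (hr2 : r ≤ N - 1)
    (D : Matrix (Fin N) (Fin N) ℝ)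
    (hD : D = Matrix.diagonal (fun i => if i ∈ S then (1 : ℝ) else 0))
    (J : Matrix (Fin N) (Fin N) ℝ) (hJ : J = Matrix.of (fun _ _ => (1 : ℝ))) :
    ((1 - (N : ℝ)⁻¹ • J) * (1 - D)).charpoly
      = Polynomial.X ^ r * (Polynomial.X - 1) ^ (N - r - 1)
        * (Polynomial.X - Polynomial.C ((r : ℝ) / N)) := by
  subst hD hJ hr
  set T : Finset (Fin N) := Sᶜ
  have hT : T.card = N - S.card := by rw [Finset.card_compl, Fintype.card_fin]
  have hT_nonempty : Nonempty T := by
    rw [Finset.nonempty_coe_sort, ← Finset.card_pos]; omega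
  have hproj : 1 - diagonal (fun i => if i ∈ S then (1 : ℝ) else 0)
      = diagonal fun i => if i ∈ T then 1 else 0 := by
    rw [← diagonal_one, diagonal_sub]
    congr 1; ext i; by_cases hi : i ∈ S <;> simp [T, hi]
  have hcompress : (1 - (N : ℝ)⁻¹ • of fun _ _ => (1 : ℝ)).submatrix ((↑) : T → Fin N) ((↑) : T → Fin N)
      = 1 - vecMulVec (fun _ => (N : ℝ)⁻¹) (fun _ => 1) := by
    ext i j; simp [one_apply, vecMulVec_apply]
  have hdot : 1 - (fun _ => (N : ℝ)⁻¹) ⬝ᵥ (fun (_ : T) => (1 : ℝ)) = S.card / N := by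
    have hN0 : (N : ℝ) ≠ 0 := by exact_mod_cast (by omega : N ≠ 0)
    simp [dotProduct, hT, Nat.cast_sub (by omega : S.card ≤ N)]
    field_simp; ring
  rw [hproj, charpoly_mul_diagonal_indicator, hcompress, charpoly_one_sub_vecMulVec, hdot,
    Fintype.card_coe, hT, Fintype.card_fin, Nat.sub_sub_self (by omega), mul_assoc]

/-- The characteristic polynomial of `(I - J/N)(I - D)`, the product of the
orthogonal projections onto the null space of the all-ones row vector and onto
the null space of the coordinate selector for `S`, is
`X^r (X - 1)^(N-r-1) (X - r/N)`. -/
theorem stmt6 {N : ℕ} (hN : 2 ≤ N) (S : Finset (Fin N)) (r : ℕ) (hr : r = S.card)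
    (hr1 : 1 ≤ r) (hr2 : r ≤ N - 1)
    (D : Matrix (Fin N) (Fin N) ℝ)
    (hD : D = Matrix.diagonal (fun i => if i ∈ S then (1 : ℝ) else 0))
    (J : Matrix (Fin N) (Fin N) ℝ) (hJ : J = Matrix.of (fun _ _ => (1 : ℝ))) :
    ((1 - (N : ℝ)⁻¹ • J) * (1 - D)).charpoly
      = Polynomial.X ^ r * (Polynomial.X - 1) ^ (N - r - 1)
        * (Polynomial.X - Polynomial.C ((r : ℝ) / N)) :=
  stmt6_general hN S r hr hr2 D hD J hJ
end

section
/- Let N ≥ 2 and let S ⊆ {1, …, N} with r = |S| and 1 ≤ r ≤ N−1. Let D be the N×N diagonal 0/1 matrix with Dᵢᵢ = 1 iff i ∈ S, let J be the N×N all-ones matrix, and let I be the N×N identity matrix. For real parameters c and λ define T = (I − J/N)(I − D) + (J/N)·D and T_{c,λ} = λ·(c·T + (1−c)·D) + (1−λ)·I. Set t = 2r/N − 1 and s = 1 − r/N. Then the characteristic polynomial of T_{c,λ} is det(X·I − T_{c,λ}) = (X − (1 − λ + λc))^{N−r−1} · (X − (1 − λc))^{r−1} · (X² − (λ(c·t −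 1) + 2)·X + (λ²·c·s + λ(c·t − 1) + 1)). -/
open Matrix Polynomial

set_option maxHeartbeats 1000000

/-- The characteristic polynomial of the Douglas–Rachford iteration matrix
`T_{c,λ} = λ(c T + (1-c) D) + (1-λ) I`, with
`T = (I - J/N)(I - D) + (J/N) D`, is
`(X - (1-λ+λc))^(N-r-1) (X - (1-λc))^(r-1) (X² - (λ(ct-1)+2) X + (λ²cs + λ(ct-1) + 1))`,
where `t = 2r/N - 1` and `s = 1 - r/N`. -/
theorem stmt7 {N : ℕ} (hN : 2 ≤ N) (S : Finset (Fin N)) (r : ℕ) (hr : r = S.card)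
    (hr1 : 1 ≤ r) (hr2 : r ≤ N - 1)
    (D : Matrix (Fin N) (Fin N) ℝ)
    (hD : D = Matrix.diagonal (fun i => if i ∈ S then (1 : ℝ) else 0))
    (J : Matrix (Fin N) (Fin N) ℝ) (hJ : J = Matrix.of (fun _ _ => (1 : ℝ)))
    (c lam t s : ℝ) (ht : t = 2 * (r : ℝ) / N - 1) (hs : s = 1 - (r : ℝ) / N)
    (T Tcl : Matrix (Fin N) (Fin N) ℝ)
    (hT : T = (1 - (N : ℝ)⁻¹ • J) * (1 - D) + ((N : ℝ)⁻¹ • J) * D)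
    (hTcl : Tcl = lam • (c • T + (1 - c) • D) + (1 - lam) • (1 : Matrix (Fin N) (Fin N) ℝ)) :
    Tcl.charpoly
      = (Polynomial.X - Polynomial.C (1 - lam + lam * c)) ^ (N - r - 1)
        * (Polynomial.X - Polynomial.C (1 - lam * c)) ^ (r - 1)
        * (Polynomial.X ^ 2 - Polynomial.C (lam * (c * t - 1) + 2) * Polynomial.X
            + Polynomial.C (lam ^ 2 * c * s + lam * (c * t - 1) + 1)) := by
  classical
  have hN0 : (N : ℝ) ≠ 0 := by positivity
  -- entry formula for Tcl
  have hJD : J * D = Matrix.of (fun _ j => if j ∈ S then (1:ℝ) else 0) := by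
    subst hJ hD
    ext i j
    simp [Matrix.mul_apply, Matrix.diagonal_apply, Finset.sum_ite_eq]
  have hT' : T = 1 - D - (N:ℝ)⁻¹ • J + (N:ℝ)⁻¹ • (J*D) + (N:ℝ)⁻¹ • (J*D) := by
    rw [hT, Matrix.sub_mul, Matrix.one_mul, Matrix.mul_sub, Matrix.mul_one, Matrix.smul_mul]
    abel
  have hentry : ∀ i j, Tcl i j
      = (if i = j then (if i ∈ S then 1 - lam*c else 1 - lam + lam*c) else 0)
        + (if j ∈ S then lam*c/N else -(lam*c)/N) := by
    intro i j
    rw [hTcl, hT']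
    simp only [Matrix.add_apply, Matrix.sub_apply, Matrix.smul_apply, hJD, hD, hJ,
      Matrix.one_apply, Matrix.diagonal_apply, Matrix.of_apply, smul_eq_mul]
    by_cases hij : i = j <;> by_cases hiS : i ∈ S <;> by_cases hjS : j ∈ S <;>
      simp [hij, hiS, hjS] <;> field_simp <;> ring
  -- move to the fraction field
  set φ : Polynomial ℝ →+* RatFunc ℝ := (algebraMap (Polynomial ℝ) (RatFunc ℝ)) with hφdef
  have hφ : Function.Injective φ := RatFunc.algebraMap_injective ℝ
  apply hφ
  rw [Matrix.charpoly, RingHom.map_det]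
  set e : ℝ →+* RatFunc ℝ := φ.comp Polynomial.C with hedef
  set x : RatFunc ℝ := φ Polynomial.X with hxdef
  set α : RatFunc ℝ := x - e (1 - lam + lam * c) with hαdef
  set β : RatFunc ℝ := x - e (1 - lam * c) with hβdef
  have hα : α ≠ 0 := by
    rw [hαdef]
    intro h
    have : φ (Polynomial.X - Polynomial.C (1 - lam + lam * c)) = 0 := by
      rw [map_sub]; exact h
    exact Polynomial.X_sub_C_ne_zero _ (hφ (by rw [this, map_zero]))
  have hβ : β ≠ 0 := by
    rw [hβdef]
    intro h
    have : φ (Polynomial.X - Polynomial.C (1 - lam * c)) = 0 := by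
      rw [map_sub]; exact h
    exact Polynomial.X_sub_C_ne_zero _ (hφ (by rw [this, map_zero]))
  set d : Fin N → RatFunc ℝ := fun i => if i ∈ S then β else α with hddef
  have hd : ∀ i, d i ≠ 0 := by
    intro i; rw [hddef]; dsimp only; split <;> assumption
  set v : Fin N → RatFunc ℝ := fun j => if j ∈ S then e (lam*c/N) else -e (lam*c/N) with hvdef
  set w : Fin N → RatFunc ℝ := fun i => -(d i)⁻¹ with hwdef
  -- factorization of the mapped charmatrix
  have hfac : (charmatrix Tcl).map φ
      = Matrix.diagonal d * (1 + Matrix.replicateCol Unit w * Matrix.replicateRow Unit v) := by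
    ext i j
    have hcr : (Matrix.replicateCol Unit w * Matrix.replicateRow Unit v) i j = w i * v j := by
      simp [Matrix.mul_apply]
    rw [Matrix.map_apply, Matrix.diagonal_mul, Matrix.add_apply, hcr, Matrix.one_apply]
    rcases eq_or_ne i j with hij | hij
    · subst hij
      rw [charmatrix_apply_eq, if_pos rfl, map_sub, hentry i i, if_pos rfl]
      have : d i * (1 + w i * v i) = d i - v i := by
        rw [hwdef]; dsimp only
        field_simp [hd i]
        ring
      rw [this, hddef, hvdef]; dsimp only
      by_cases hiS : i ∈ S <;>
        simp only [hiS, if_true, if_false, hαdef, hβdef, map_add, hedef, RingHom.comp_apply,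
          map_sub] <;>
        push_cast <;> ring_nf <;>
        simp [map_add, map_sub, map_neg, map_div₀] <;> ring
    · rw [charmatrix_apply_ne _ _ _ hij, if_neg hij, map_neg, hentry i j, if_neg hij, zero_add]
      have : d i * (0 + w i * v j) = -v j := by
        rw [hwdef]; dsimp only
        field_simp [hd i]
        ring
      rw [this, hvdef]; dsimp only
      have hec : ∀ y : ℝ, φ (Polynomial.C y) = e y := fun y => rfl
      by_cases hjS : j ∈ S <;> simp [hjS, hec, neg_div]
  -- determinant computation
  rw [RingHom.mapMatrix_apply, hfac, Matrix.det_mul, Matrix.det_diagonal, Matrix.det_one_add_replicateCol_mul_replicateRow]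
  have hcardS : (Finset.univ.filter (fun i : Fin N => i ∈ S)).card = r := by
    rw [Finset.filter_univ_mem, hr]
  have hcardSc : (Finset.univ.filter (fun i : Fin N => ¬ i ∈ S)).card = N - r := by
    rw [Finset.filter_not, Finset.filter_univ_mem,
      Finset.card_sdiff_of_subset (Finset.subset_univ S), Finset.card_univ, Fintype.card_fin, hr]
  have hprod : ∏ i, d i = β ^ r * α ^ (N - r) := by
    rw [hddef, Finset.prod_ite, Finset.prod_const, Finset.prod_const, hcardS, hcardSc]
  have hdot : v ⬝ᵥ w = (r : RatFunc ℝ) * (e (lam*c/N) * -β⁻¹)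
      + ((N - r : ℕ) : RatFunc ℝ) * (e (lam*c/N) * α⁻¹) := by
    rw [dotProduct]
    have hvw : ∀ i, v i * w i
        = if i ∈ S then e (lam*c/N) * -β⁻¹ else e (lam*c/N) * α⁻¹ := by
      intro i; rw [hvdef, hwdef, hddef]; dsimp only
      by_cases hiS : i ∈ S <;> simp [hiS] <;> ring
    simp_rw [hvw]
    rw [Finset.sum_ite, Finset.sum_const, Finset.sum_const, hcardS, hcardSc]
    simp [nsmul_eq_mul]
  rw [hprod, hdot]
  -- rewrite the RHS image
  have hec : ∀ y : ℝ, φ (Polynomial.C y) = e y := fun y => rfl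
  have hRHS : φ ((Polynomial.X - Polynomial.C (1 - lam + lam * c)) ^ (N - r - 1)
        * (Polynomial.X - Polynomial.C (1 - lam * c)) ^ (r - 1)
        * (Polynomial.X ^ 2 - Polynomial.C (lam * (c * t - 1) + 2) * Polynomial.X
            + Polynomial.C (lam ^ 2 * c * s + lam * (c * t - 1) + 1)))
      = α ^ (N - r - 1) * β ^ (r - 1)
        * (x^2 - e (lam * (c * t - 1) + 2) * x + e (lam ^ 2 * c * s + lam * (c * t - 1) + 1)) := by
    simp only [_root_.map_mul, map_pow, map_sub, _root_.map_add]
    simp only [hec, ← hxdef]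
    simp only [← _root_.map_mul, ← _root_.map_add, ← _root_.map_sub, ← hαdef, ← hβdef]
  rw [hRHS]
  -- real coefficient identities
  have hNr : ((N - r : ℕ) : ℝ) = (N : ℝ) - r := by
    have : r ≤ N := by omega
    push_cast [this]
    ring
  have hτ : lam * (c * t - 1) + 2
      = (1 - lam + lam * c) + (1 - lam * c) + (r : ℝ) * (lam*c/N) - ((N - r : ℕ) : ℝ) * (lam*c/N) := by
    rw [hNr, ht]; field_simp; ring
  have hδ : lam ^ 2 * c * s + lam * (c * t - 1) + 1
      = (1 - lam + lam * c) * (1 - lam * c) + ((r : ℝ) * (lam*c/N)) * (1 - lam + lam * c)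
        - (((N - r : ℕ) : ℝ) * (lam*c/N)) * (1 - lam * c) := by
    rw [hNr, ht, hs]; field_simp; ring
  have hτF : e (lam * (c * t - 1) + 2)
      = e (1 - lam + lam * c) + e (1 - lam * c) + (r : RatFunc ℝ) * e (lam*c/N)
        - ((N - r : ℕ) : RatFunc ℝ) * e (lam*c/N) := by
    simp only [← map_natCast e, ← _root_.map_mul, ← _root_.map_add, ← _root_.map_sub]
    exact congrArg e hτ
  have hδF : e (lam ^ 2 * c * s + lam * (c * t - 1) + 1)
      = e (1 - lam + lam * c) * e (1 - lam * c)
        + ((r : RatFunc ℝ) * e (lam*c/N)) * e (1 - lam + lam * c)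
        - (((N - r : ℕ) : RatFunc ℝ) * e (lam*c/N)) * e (1 - lam * c) := by
    simp only [← map_natCast e, ← _root_.map_mul, ← _root_.map_add, ← _root_.map_sub]
    exact congrArg e hδ
  have key : β * α * (1 + ((r : RatFunc ℝ) * (e (lam*c/N) * -β⁻¹)
        + ((N - r : ℕ) : RatFunc ℝ) * (e (lam*c/N) * α⁻¹)))
      = x^2 - e (lam * (c * t - 1) + 2) * x + e (lam ^ 2 * c * s + lam * (c * t - 1) + 1) := by
    have hββ : β * β⁻¹ = 1 := mul_inv_cancel₀ hβ
    have hαα : α * α⁻¹ = 1 := mul_inv_cancel₀ hα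
    have expand : β * α * (1 + ((r : RatFunc ℝ) * (e (lam*c/N) * -β⁻¹)
        + ((N - r : ℕ) : RatFunc ℝ) * (e (lam*c/N) * α⁻¹)))
        = β * α - (r : RatFunc ℝ) * e (lam*c/N) * α
          + ((N - r : ℕ) : RatFunc ℝ) * e (lam*c/N) * β := by
      linear_combination (-((r : RatFunc ℝ) * e (lam*c/N) * α)) * hββ
        + (((N - r : ℕ) : RatFunc ℝ) * e (lam*c/N) * β) * hαα
    rw [expand, hτF, hδF, hαdef, hβdef]
    ring
  have hb1 : β ^ r = β ^ (r - 1) * β := by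
    rw [← pow_succ]; congr 1; omega
  have ha1 : α ^ (N - r) = α ^ (N - r - 1) * α := by
    rw [← pow_succ]; congr 1; omega
  calc β ^ r * α ^ (N - r) * (1 + ((r : RatFunc ℝ) * (e (lam*c/N) * -β⁻¹)
        + ((N - r : ℕ) : RatFunc ℝ) * (e (lam*c/N) * α⁻¹)))
      = (β ^ (r-1) * α ^ (N-r-1)) * (β * α * (1 + ((r : RatFunc ℝ) * (e (lam*c/N) * -β⁻¹)
        + ((N - r : ℕ) : RatFunc ℝ) * (e (lam*c/N) * α⁻¹)))) := by
        rw [hb1, ha1]; ring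
    _ = (β ^ (r-1) * α ^ (N-r-1))
        * (x^2 - e (lam * (c * t - 1) + 2) * x + e (lam ^ 2 * c * s + lam * (c * t - 1) + 1)) := by
        rw [key]
    _ = α ^ (N - r - 1) * β ^ (r - 1)
        * (x^2 - e (lam * (c * t - 1) + 2) * x + e (lam ^ 2 * c * s + lam * (c * t - 1) + 1)) := by
        ring
end

section
/- Let θ ∈ (0, π/2), λ ∈ (0, 2], and c ∈ (0, 1) with c²·cos²(2θ) − 2c + 1 < 0. Then the monic quadratic z² − (λ(c·cos 2θ − 1) + 2)·z + (λ²·c·sin²θ + λ(c·cos 2θ − 1) + 1) has two nonreal complex-conjugate roots, and each root has modulus √(c·λ²·sin²θ − (1 − c·cos 2θ)·λ + 1); in particular c·λ²·sin²θ − (1 − c·cos 2θ)·λ + 1 > 0. -/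
/-!
Writing `cos 2θ = 1 - 2 sin² θ`, the discriminant of the quadratic is
`λ² (c² cos² 2θ - 2c + 1) < 0`. A real monic quadratic `w² - b w + q` with `b² < 4q` factors as
`(w - z)(w - z̄)` with `z = b/2 + i √(q - b²/4)`, and then `‖z‖² = z z̄ = q`.
-/

open Real ComplexConjugate

theorem Complex.sq_sub_mul_add_normSq (z w : ℂ) :
    w ^ 2 - ((2 * z.re : ℝ) : ℂ) * w + (Complex.normSq z : ℂ) = (w - z) * (w - conj z) := by
  rw [Complex.normSq_eq_conj_mul_self, Complex.ofReal_mul, Complex.re_eq_add_conj]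
  push_cast
  ring

theorem Complex.exists_conj_roots_of_discrim_neg {b q : ℝ} (h : b ^ 2 < 4 * q) :
    ∃ z : ℂ, z.im ≠ 0 ∧ (∀ w : ℂ, w ^ 2 - (b : ℂ) * w + (q : ℂ) = 0 ↔ w = z ∨ w = conj z) ∧
      ‖z‖ = √q := by
  have hs : 0 < q - (b / 2) ^ 2 := by linarith
  set z : ℂ := ⟨b / 2, √(q - (b / 2) ^ 2)⟩
  have hz_re : 2 * z.re = b := by simp only [z]; ring
  have hz_normSq : Complex.normSq z = q := by
    simp only [z, Complex.normSq_mk, ← sq, Real.sq_sqrt hs.le]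
    ring
  refine ⟨z, (Real.sqrt_pos.mpr hs).ne', fun w ↦ ?_, ?_⟩
  · rw [← hz_re, ← hz_normSq, Complex.sq_sub_mul_add_normSq, mul_eq_zero, sub_eq_zero,
      sub_eq_zero]
  · rw [Complex.norm_def, hz_normSq]

theorem douglasRachford_discrim (θ lam c : ℝ) :
    4 * (lam ^ 2 * c * sin θ ^ 2 + lam * (c * cos (2 * θ) - 1) + 1)
        - (lam * (c * cos (2 * θ) - 1) + 2) ^ 2
      = -(lam ^ 2 * (c ^ 2 * cos (2 * θ) ^ 2 - 2 * c + 1)) := by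
  rw [cos_two_mul, cos_sq']
  ring

theorem stmt9_general (θ lam c : ℝ)
    (hlam : lam ∈ Set.Ioc (0 : ℝ) 2)
    (hdisc : c ^ 2 * cos (2 * θ) ^ 2 - 2 * c + 1 < 0) :
    0 < c * lam ^ 2 * sin θ ^ 2 - (1 - c * cos (2 * θ)) * lam + 1 ∧
    ∃ z : ℂ, z.im ≠ 0 ∧
      (∀ w : ℂ,
        w ^ 2 - Complex.ofReal (lam * (c * cos (2 * θ) - 1) + 2) * w
            + Complex.ofReal (lam ^ 2 * c * sin θ ^ 2 + lam * (c * cos (2 * θ) - 1) + 1) = 0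
          ↔ w = z ∨ w = (starRingEnd ℂ) z) ∧
      ‖z‖
        = Real.sqrt (c * lam ^ 2 * sin θ ^ 2 - (1 - c * cos (2 * θ)) * lam + 1) := by
  have hq : c * lam ^ 2 * sin θ ^ 2 - (1 - c * cos (2 * θ)) * lam + 1
      = lam ^ 2 * c * sin θ ^ 2 + lam * (c * cos (2 * θ) - 1) + 1 := by ring
  have hlam_sq : 0 < lam ^ 2 := pow_pos hlam.1 2
  have hneg : (lam * (c * cos (2 * θ) - 1) + 2) ^ 2
      < 4 * (lam ^ 2 * c * sin θ ^ 2 + lam * (c * cos (2 * θ) - 1) + 1) := by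
    have := douglasRachford_discrim θ lam c
    nlinarith
  rw [hq]
  exact ⟨by nlinarith [sq_nonneg (lam * (c * cos (2 * θ) - 1) + 2)],
    Complex.exists_conj_roots_of_discrim_neg hneg⟩

/-- When the discriminant `c² cos²(2θ) - 2c + 1` is negative, the quadratic
factor of the Douglas–Rachford characteristic polynomial has two nonreal
complex-conjugate roots of common modulus
`√(c λ² sin²θ - (1 - c cos 2θ) λ + 1)`; in particular that quantity under the
square root is positive. -/
theorem stmt9 (θ lam c : ℝ) (hθ : θ ∈ Set.Ioo 0 (π / 2))
    (hlam : lam ∈ Set.Ioc (0 : ℝ) 2) (hc : c ∈ Set.Ioo (0 : ℝ) 1)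
    (hdisc : c ^ 2 * cos (2 * θ) ^ 2 - 2 * c + 1 < 0) :
    0 < c * lam ^ 2 * sin θ ^ 2 - (1 - c * cos (2 * θ)) * lam + 1 ∧
    ∃ z : ℂ, z.im ≠ 0 ∧
      (∀ w : ℂ,
        w ^ 2 - Complex.ofReal (lam * (c * cos (2 * θ) - 1) + 2) * w
            + Complex.ofReal (lam ^ 2 * c * sin θ ^ 2 + lam * (c * cos (2 * θ) - 1) + 1) = 0
          ↔ w = z ∨ w = (starRingEnd ℂ) z) ∧
      ‖z‖
        = Real.sqrt (c * lam ^ 2 * sin θ ^ 2 - (1 - c * cos (2 * θ)) * lam + 1) :=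
  stmt9_general θ lam c hlam hdisc
end

section
/- Let θ ∈ (π/4, π/2] and set c* = 1/(cos θ + sin θ)². Then the pair (c, λ) = (1/2, 4/(2 − cos 2θ)) lies in (0, c*) × (0, 2] and is the unique solution in (0, c*) × (0, 2] of the system of equations |1 − λ(1 − c)| = (λ/2)·√(c²·cos²(2θ) − 2c + 1) and λ·c·cos(2θ) − λ + 2 = 0. Moreover, at this solution, |1 − λ(1 − c)| = −cos(2θ)/(2 − cos 2θ). -/
open Real

set_option maxHeartbeats 800000 in
/-- For `θ ∈ (π/4, π/2]`, the pair `(c, λ) = (1/2, 4/(2 - cos 2θ))` lies in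
`(0, c*) × (0, 2]` with `c* = 1/(cos θ + sin θ)²`, is the unique solution there
of the system `|1 - λ(1-c)| = (λ/2)√(c² cos²(2θ) - 2c + 1)` and
`λ c cos(2θ) - λ + 2 = 0`, and at this solution
`|1 - λ(1-c)| = -cos(2θ)/(2 - cos 2θ)`. -/
theorem stmt11 (θ : ℝ) (hθ : θ ∈ Set.Ioc (π / 4) (π / 2))
    (cstar : ℝ) (hcstar : cstar = 1 / (cos θ + sin θ) ^ 2) :
    ((0 : ℝ) < 1 / 2 ∧ (1 : ℝ) / 2 < cstar) ∧
    (0 < 4 / (2 - cos (2 * θ)) ∧ 4 / (2 - cos (2 * θ)) ≤ 2) ∧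
    (∀ c lam : ℝ, 0 < c → c < cstar → 0 < lam → lam ≤ 2 →
      ((|1 - lam * (1 - c)| = (lam / 2) * Real.sqrt (c ^ 2 * cos (2 * θ) ^ 2 - 2 * c + 1) ∧
          lam * c * cos (2 * θ) - lam + 2 = 0)
        ↔ (c = 1 / 2 ∧ lam = 4 / (2 - cos (2 * θ))))) ∧
    |1 - (4 / (2 - cos (2 * θ))) * (1 - 1 / 2)| = -cos (2 * θ) / (2 - cos (2 * θ)) := by
  obtain ⟨hθ1, hθ2⟩ := hθ
  have hpi := Real.pi_pos
  set k := Real.cos (2 * θ) with hk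
  set s := Real.sin (2 * θ) with hs
  have hk0 : k < 0 := Real.cos_neg_of_pi_div_two_lt_of_lt (by linarith) (by linarith)
  have hs0 : 0 ≤ s := Real.sin_nonneg_of_nonneg_of_le_pi (by linarith) (by linarith)
  have hsk : s ^ 2 + k ^ 2 = 1 := Real.sin_sq_add_cos_sq _
  have hs1 : s < 1 := by nlinarith
  have h2k : 0 < 2 - k := by linarith
  have hcs : cstar = 1 / (1 + s) := by
    rw [hcstar]
    have h1 := Real.sin_sq_add_cos_sq θ
    have h2 : s = 2 * Real.sin θ * Real.cos θ := by rw [hs, Real.sin_two_mul]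
    have : (Real.cos θ + Real.sin θ) ^ 2 = 1 + s := by nlinarith
    rw [this]
  have hfin : 1 - 4 / (2 - k) * (1 - 1 / 2) = -k / (2 - k) := by
    field_simp
    ring
  have hfinabs : |1 - 4 / (2 - k) * (1 - 1 / 2)| = -k / (2 - k) := by
    rw [hfin, abs_of_nonneg (div_nonneg (by linarith) h2k.le)]
  refine ⟨⟨by norm_num, ?_⟩, ⟨by positivity, ?_⟩, ?_, hfinabs⟩
  · rw [hcs]
    rw [lt_div_iff₀ (by linarith)]
    linarith
  · rw [div_le_iff₀ h2k]
    linarith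
  · intro c lam hc hccs hlam hlam2
    have hccs' : c * (1 + s) < 1 := by
      rw [hcs, lt_div_iff₀ (by linarith)] at hccs
      linarith
    have hf1 : 0 < 1 - c * (1 + s) := by linarith
    have hf2 : 0 < 1 - c * (1 - s) := by nlinarith [mul_nonneg hc.le hs0]
    have hcs2 : c ^ 2 * s ^ 2 = c ^ 2 - c ^ 2 * k ^ 2 := by linear_combination c ^ 2 * hsk
    have hD : 0 < c ^ 2 * k ^ 2 - 2 * c + 1 := by nlinarith [mul_pos hf1 hf2, hcs2]
    constructor
    · rintro ⟨eq1, eq2⟩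
      have h2 : lam * (1 - c * k) = 2 := by linear_combination -eq2
      have hA2 : (1 - lam * (1 - c)) ^ 2 = (lam / 2) ^ 2 * (c ^ 2 * k ^ 2 - 2 * c + 1) := by
        have h := congrArg (· ^ 2) eq1
        rw [sq_abs] at h
        rw [h, mul_pow, Real.sq_sqrt hD.le]
      have hA2' : (2 * c - 1 - c * k) ^ 2 = c ^ 2 * k ^ 2 - 2 * c + 1 := by
        linear_combination (1 - c * k) ^ 2 * hA2 +
          ((lam * (1 - c * k) + 2) * (c ^ 2 * k ^ 2 - 2 * c + 1) / 4 +
            2 * (2 * c - 1 - c * k) * (1 - c) - (1 - c) ^ 2 * (lam * (1 - c * k) - 2)) * h2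
      have hfac : 2 * c * (1 - 2 * c) * (k - 1) = 0 := by linear_combination hA2'
      have hc12 : c = 1 / 2 := by
        rcases mul_eq_zero.mp hfac with h | h
        · rcases mul_eq_zero.mp h with h' | h'
          · linarith
          · linarith
        · linarith
      refine ⟨hc12, ?_⟩
      rw [hc12] at h2
      field_simp
      linear_combination 2 * h2
    · rintro ⟨hc12, hlamval⟩
      subst hc12 hlamval
      constructor
      · have hsq : (1 / 2 : ℝ) ^ 2 * k ^ 2 - 2 * (1 / 2) + 1 = (-k / 2) ^ 2 := by ring
        rw [hsq, Real.sqrt_sq (by linarith), hfinabs]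
        field_simp
        ring
      · field_simp
        ring
end

section
/- For every θ ∈ (π/4, π/2], the following two inequalities hold: 1 + (cos(2θ)/sin²θ)·(1 − 1/(cos θ + sin θ)²) > 1/2, and 1/2 > −cos(2θ)/(2 − cos 2θ). -/
open Real

/-- For `θ ∈ (π/4, π/2]`:
`1 + (cos 2θ / sin²θ)(1 - 1/(cos θ + sin θ)²) > 1/2` and
`1/2 > -cos 2θ / (2 - cos 2θ)`. -/
theorem stmt12 (θ : ℝ) (hθ : θ ∈ Set.Ioc (π / 4) (π / 2)) :
    (1 : ℝ) / 2 < 1 + (cos (2 * θ) / sin θ ^ 2) * (1 - 1 / (cos θ + sin θ) ^ 2) ∧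
    -cos (2 * θ) / (2 - cos (2 * θ)) < 1 / 2 := by
  obtain ⟨h1, h2⟩ := hθ
  have hpi := Real.pi_pos
  have hs : 0 < sin θ := Real.sin_pos_of_pos_of_lt_pi (by linarith) (by linarith)
  have hc : 0 ≤ cos θ := Real.cos_nonneg_of_mem_Icc ⟨by linarith, h2⟩
  have hcs : cos θ < sin θ := by
    have hc4 : cos θ < cos (π / 4) := by
      apply Real.cos_lt_cos_of_nonneg_of_le_pi (by positivity) (by linarith) h1
    have hs4 : sin (π / 4) < sin θ := by
      apply Real.sin_lt_sin_of_lt_of_le_pi_div_two (by linarith) h2 h1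
    rw [Real.cos_pi_div_four] at hc4
    rw [Real.sin_pi_div_four] at hs4
    linarith
  have hpyth : cos θ ^ 2 + sin θ ^ 2 = 1 := by
    rw [add_comm]; exact Real.sin_sq_add_cos_sq θ
  rw [show (2:ℝ) * θ = θ + θ by ring, Real.cos_add]
  set c := cos θ
  set s := sin θ
  have hcss : 0 < c + s := by linarith
  constructor
  · rw [show c * c - s * s = c^2 - s^2 by ring]
    have hs2 : (0:ℝ) < s ^ 2 := by positivity
    have hcs2 : (0:ℝ) < (c + s) ^ 2 := by positivity
    have hB : (0:ℝ) < s ^ 2 * (c + s) ^ 2 := by positivity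
    have h : (c ^ 2 - s ^ 2) / s ^ 2 * (1 - 1 / (c + s) ^ 2)
        = (c ^ 2 - s ^ 2) * ((c + s) ^ 2 - 1) / (s ^ 2 * (c + s) ^ 2) := by
      field_simp
    rw [h]
    have key : (-1 : ℝ) / 2 < (c ^ 2 - s ^ 2) * ((c + s) ^ 2 - 1) / (s ^ 2 * (c + s) ^ 2) := by
      rw [div_lt_div_iff₀ (by norm_num) hB]
      nlinarith [mul_nonneg hc hs.le, sq_nonneg (c - s), sq_nonneg (c + s),
        mul_nonneg (sq_nonneg c) (sq_nonneg (c - s)),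
        mul_nonneg (mul_nonneg hc hs.le) (sq_nonneg (c - s)),
        mul_nonneg (sq_nonneg s) (sq_nonneg (c - s)),
        mul_nonneg (mul_nonneg hc hs.le) (sq_nonneg (c + s))]
    linarith
  · rw [div_lt_iff₀ (by nlinarith : (0:ℝ) < 2 - (c * c - s * s))]
    nlinarith
end

section
/- Let θ ∈ (0, π/4] and set c* = 1/(cos θ + sin θ)². On the domain D = (0, c*] × (0, 2], define ρ₁(c, λ) = 1 − λ(1 − c) and ρ₂(c, λ) = (1/2)·(λ·c·cos(2θ) − λ + 2 + λ·√(c²·cos²(2θ) − 2c + 1)). Then the minimum over (c, λ) ∈ D of max{|ρ₁(c, λ)|, |ρ₂(c, λ)|} equals c*·cos(2θ), and it is attained at (c, λ) = (c*, 2). -/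
/-!
Write `s = cos 2θ`, `t = sin 2θ`, so that `s² + t² = 1`, `(cos θ + sin θ)² = 1 + t` and
`c* = 1/(1 + t)`. The discriminant factors as `(1 - c(1 + t))(1 - c(1 - t))`, so it vanishes at
`c = c*`; there `ρ₂(c*, 2) = c* s` and `|ρ₁(c*, 2)| = |2c* - 1| ≤ c* s`.
For the lower bound, `√Δ ≤ 1 - cs` makes `ρ₂` decreasing in `λ`, so `ρ₂(c, λ) ≥ cs + √Δ`, and
`√Δ ≥ s(c* - c)` on `(0, c*]` gives `cs + √Δ ≥ c* s`.
-/

open Real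

section Discriminant

variable {s t a c : ℝ}

lemma discriminant_eq_mul (hst : s ^ 2 + t ^ 2 = 1) :
    c ^ 2 * s ^ 2 - 2 * c + 1 = (1 - c * (1 + t)) * (1 - c * (1 - t)) := by
  linear_combination c ^ 2 * hst

lemma sqrt_discriminant_le (hst : s ^ 2 + t ^ 2 = 1) (hc : 0 ≤ c) (hcs : c * s ≤ 1) :
    √(c ^ 2 * s ^ 2 - 2 * c + 1) ≤ 1 - c * s := by
  have hs : s ≤ 1 := by nlinarith
  rw [Real.sqrt_le_iff]
  constructor
  · linarith
  · nlinarith [mul_nonneg hc (sub_nonneg.mpr hs)]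

lemma mul_sub_le_sqrt_discriminant (hst : s ^ 2 + t ^ 2 = 1) (hs : 0 ≤ s) (ht : 0 ≤ t)
    (ha : a * (1 + t) = 1) (hc : 0 ≤ c) (hca : c ≤ a) :
    s * (a - c) ≤ √(c ^ 2 * s ^ 2 - 2 * c + 1) := by
  rw [Real.le_sqrt (mul_nonneg hs (sub_nonneg.mpr hca)) ?_]
  · -- both sides carry the factor `(1 + t)(a - c)`; what remains is `(1 - t) a ≤ 1`
    have hrest : 0 ≤ 1 - c * (1 - t) - (1 - t) * (a - c) := by nlinarith
    have hfac : 0 ≤ (1 + t) * (a - c) := mul_nonneg (by linarith) (sub_nonneg.mpr hca)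
    have hdiff : c ^ 2 * s ^ 2 - 2 * c + 1 - (s * (a - c)) ^ 2
        = (1 + t) * (a - c) * (1 - c * (1 - t) - (1 - t) * (a - c)) := by
      linear_combination (c ^ 2 - (a - c) ^ 2) * hst + (c * (1 - t) - 1) * ha
    nlinarith [mul_nonneg hfac hrest]
  · rw [discriminant_eq_mul hst]
    apply mul_nonneg <;> nlinarith

lemma discriminant_eq_zero (hst : s ^ 2 + t ^ 2 = 1) (ha : a * (1 + t) = 1) :
    a ^ 2 * s ^ 2 - 2 * a + 1 = 0 := by
  rw [discriminant_eq_mul hst, ha, sub_self, zero_mul]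

lemma add_sqrt_discriminant_le_of_le_two {lam : ℝ} (hst : s ^ 2 + t ^ 2 = 1) (hc : 0 ≤ c)
    (hcs : c * s ≤ 1) (hlam : lam ≤ 2) :
    c * s + √(c ^ 2 * s ^ 2 - 2 * c + 1)
      ≤ 1 / 2 * (lam * c * s - lam + 2 + lam * √(c ^ 2 * s ^ 2 - 2 * c + 1)) := by
  nlinarith [mul_nonneg (sub_nonneg.mpr hlam) (sub_nonneg.mpr (sqrt_discriminant_le hst hc hcs))]

lemma mul_le_rho2 {lam : ℝ} (hst : s ^ 2 + t ^ 2 = 1) (hs : 0 ≤ s) (ht : 0 ≤ t)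
    (ha : a * (1 + t) = 1) (hc : 0 ≤ c) (hca : c ≤ a) (hlam : lam ≤ 2) :
    a * s ≤ 1 / 2 * (lam * c * s - lam + 2 + lam * √(c ^ 2 * s ^ 2 - 2 * c + 1)) := by
  have hcs : c * s ≤ 1 := by
    nlinarith [mul_le_mul_of_nonneg_left (show s ≤ 1 + t by nlinarith) hc,
      mul_le_mul_of_nonneg_right hca (show 0 ≤ 1 + t by linarith)]
  calc a * s ≤ c * s + √(c ^ 2 * s ^ 2 - 2 * c + 1) := by
        nlinarith [mul_sub_le_sqrt_discriminant hst hs ht ha hc hca]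
    _ ≤ _ := add_sqrt_discriminant_le_of_le_two hst hc hcs hlam

lemma abs_rho1_le (hst : s ^ 2 + t ^ 2 = 1) (hs : 0 ≤ s) (ht : 0 ≤ t)
    (ha : a * (1 + t) = 1) : |1 - 2 * (1 - a)| ≤ a * s := by
  have ha0 : 0 ≤ a := by nlinarith
  have hsum : 1 ≤ s + t := by nlinarith
  rw [abs_le]
  constructor
  · nlinarith [mul_nonneg ha0 (show 0 ≤ 1 + s - t by nlinarith)]
  · nlinarith [mul_nonneg ha0 (sub_nonneg.mpr hsum)]

end Discriminant

lemma cos_add_sin_sq (θ : ℝ) : (cos θ + sin θ) ^ 2 = 1 + sin (2 * θ) := by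
  linear_combination sin_sq_add_cos_sq θ - sin_two_mul θ

/-- For `θ ∈ (0, π/4]` and `c* = 1/(cos θ + sin θ)²`, the minimum of
`max{|ρ₁(c,λ)|, |ρ₂(c,λ)|}` over `(c, λ) ∈ (0, c*] × (0, 2]` equals
`c* cos 2θ`, attained at `(c, λ) = (c*, 2)`. -/
theorem stmt14 (θ : ℝ) (hθ : θ ∈ Set.Ioc 0 (π / 4))
    (cstar : ℝ) (hcstar : cstar = 1 / (cos θ + sin θ) ^ 2)
    (rho1 rho2 : ℝ → ℝ → ℝ)
    (hrho1 : rho1 = fun c lam => 1 - lam * (1 - c))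
    (hrho2 : rho2 = fun c lam =>
      (1 / 2) * (lam * c * cos (2 * θ) - lam + 2
        + lam * Real.sqrt (c ^ 2 * cos (2 * θ) ^ 2 - 2 * c + 1))) :
    (∀ c lam : ℝ, c ∈ Set.Ioc (0 : ℝ) cstar → lam ∈ Set.Ioc (0 : ℝ) 2 →
      cstar * cos (2 * θ) ≤ max |rho1 c lam| |rho2 c lam|) ∧
    max |rho1 cstar 2| |rho2 cstar 2| = cstar * cos (2 * θ) := by
  obtain ⟨hθ0, hθ1⟩ := hθ
  have hs : 0 ≤ cos (2 * θ) := cos_nonneg_of_mem_Icc ⟨by linarith [pi_pos], by linarith⟩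
  have ht : 0 ≤ sin (2 * θ) := sin_nonneg_of_nonneg_of_le_pi (by linarith) (by linarith)
  have hst := cos_sq_add_sin_sq (2 * θ)
  have ha : cstar * (1 + sin (2 * θ)) = 1 := by
    rw [hcstar, cos_add_sin_sq]; field_simp
  have ha0 : 0 ≤ cstar := by nlinarith
  subst hrho1 hrho2
  refine ⟨fun c lam ⟨hc0, hca⟩ ⟨_, hlam⟩ => ?_, ?_⟩
  · exact le_max_of_le_right ((mul_le_rho2 hst hs ht ha hc0.le hca hlam).trans (le_abs_self _))
  · simp only [discriminant_eq_zero hst ha, sqrt_zero]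
    have hrho2 : 1 / 2 * (2 * cstar * cos (2 * θ) - 2 + 2 + 2 * 0) = cstar * cos (2 * θ) := by
      ring
    rw [hrho2, abs_of_nonneg (mul_nonneg ha0 hs), max_eq_right (abs_rho1_le hst hs ht ha)]
end

section
/- Let θ ∈ (0, π/4] and set c* = 1/(cos θ + sin θ)². Define κ̃(c, λ) = λ·c·cos(2θ) − λ + 2 + λ·√(c²·cos²(2θ) − 2c + 1). Then κ̃ is nonincreasing in each variable on (0, c*] × (0, 2]: for all 0 < c₁ ≤ c₂ ≤ c* and λ ∈ (0, 2], κ̃(c₂, λ) ≤ κ̃(c₁, λ); and for all c ∈ (0, c*] and 0 < λ₁ ≤ λ₂ ≤ 2, κ̃(c, λ₂) ≤ κ̃(c, λ₁). -/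
set_option maxHeartbeats 1000000


open Real

/-- For `θ ∈ (0, π/4]` and `c* = 1/(cos θ + sin θ)²`, the quantity
`κ̃(c, λ) = λ c cos 2θ - λ + 2 + λ √(c² cos²(2θ) - 2c + 1)` is nonincreasing in
each variable on `(0, c*] × (0, 2]`. -/
theorem stmt15 (θ : ℝ) (hθ : θ ∈ Set.Ioc 0 (π / 4))
    (cstar : ℝ) (hcstar : cstar = 1 / (cos θ + sin θ) ^ 2)
    (kappa : ℝ → ℝ → ℝ)
    (hkappa : kappa = fun c lam =>
      lam * c * cos (2 * θ) - lam + 2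
        + lam * Real.sqrt (c ^ 2 * cos (2 * θ) ^ 2 - 2 * c + 1)) :
    (∀ c₁ c₂ lam : ℝ, 0 < c₁ → c₁ ≤ c₂ → c₂ ≤ cstar → lam ∈ Set.Ioc (0 : ℝ) 2 →
      kappa c₂ lam ≤ kappa c₁ lam) ∧
    (∀ c lam₁ lam₂ : ℝ, c ∈ Set.Ioc (0 : ℝ) cstar → 0 < lam₁ → lam₁ ≤ lam₂ → lam₂ ≤ 2 →
      kappa c lam₂ ≤ kappa c lam₁) := by
  obtain ⟨hθ0, hθ1⟩ := hθ
  subst hcstar hkappa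
  have hπ := Real.pi_pos
  set a := cos (2 * θ) with ha
  set s := sin (2 * θ) with hs
  have h2θ0 : (0:ℝ) ≤ 2 * θ := by linarith
  have h2θ1 : 2 * θ ≤ π / 2 := by linarith
  have ha0 : 0 ≤ a := Real.cos_nonneg_of_mem_Icc ⟨by linarith, h2θ1⟩
  have ha1 : a ≤ 1 := Real.cos_le_one _
  have hs0 : 0 ≤ s := Real.sin_nonneg_of_nonneg_of_le_pi h2θ0 (by linarith)
  have hs1 : s ≤ 1 := Real.sin_le_one _
  have hpyth : a ^ 2 + s ^ 2 = 1 := by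
    rw [ha, hs, add_comm]; exact Real.sin_sq_add_cos_sq _
  have hsq : (cos θ + sin θ) ^ 2 = 1 + s := by
    have h2 : s = 2 * sin θ * cos θ := Real.sin_two_mul θ
    have h3 := Real.sin_sq_add_cos_sq θ
    nlinarith
  have hsqpos : (0:ℝ) < (cos θ + sin θ) ^ 2 := by rw [hsq]; linarith
  -- reformulated bound from c ≤ cstar
  have hcs : ∀ c : ℝ, c ≤ 1 / (cos θ + sin θ) ^ 2 → c * (1 + s) ≤ 1 := by
    intro c hc
    rw [le_div_iff₀ hsqpos] at hc
    calc c * (1 + s) = c * (cos θ + sin θ) ^ 2 := by rw [hsq]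
      _ ≤ 1 := hc
  have hc1 : ∀ c : ℝ, 0 < c → c * (1 + s) ≤ 1 → c ≤ 1 := by
    intro c hc0 hc; nlinarith
  -- D(c) ≥ 0 for 0 < c ≤ cstar
  have hD : ∀ c : ℝ, 0 < c → c * (1 + s) ≤ 1 → 0 ≤ c ^ 2 * a ^ 2 - 2 * c + 1 := by
    intro c hc0 hc
    have h1 : (1 - s) * c ≤ 1 := by nlinarith
    nlinarith [mul_nonneg (by linarith : (0:ℝ) ≤ 1 - (1 - s) * c)
      (by linarith : (0:ℝ) ≤ 1 - (1 + s) * c)]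
  -- key bound: a * √D ≤ 1 - a² c
  have hkey : ∀ c : ℝ, 0 < c → c ≤ 1 →
      a * Real.sqrt (c ^ 2 * a ^ 2 - 2 * c + 1) ≤ 1 - a ^ 2 * c := by
    intro c hc0 hc1
    have hr : 0 ≤ 1 - a ^ 2 * c := by nlinarith
    have h1 : a * Real.sqrt (c ^ 2 * a ^ 2 - 2 * c + 1)
        = Real.sqrt (a ^ 2 * (c ^ 2 * a ^ 2 - 2 * c + 1)) := by
      rw [Real.sqrt_mul (sq_nonneg a), Real.sqrt_sq ha0]
    rw [h1]
    calc Real.sqrt (a ^ 2 * (c ^ 2 * a ^ 2 - 2 * c + 1))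
        ≤ Real.sqrt ((1 - a ^ 2 * c) ^ 2) := Real.sqrt_le_sqrt (by nlinarith)
      _ = 1 - a ^ 2 * c := Real.sqrt_sq hr
  -- √D ≤ 1 - a c
  have hkey2 : ∀ c : ℝ, 0 < c → c ≤ 1 →
      Real.sqrt (c ^ 2 * a ^ 2 - 2 * c + 1) ≤ 1 - a * c := by
    intro c hc0 hc1
    have hr : 0 ≤ 1 - a * c := by nlinarith
    calc Real.sqrt (c ^ 2 * a ^ 2 - 2 * c + 1)
        ≤ Real.sqrt ((1 - a * c) ^ 2) := Real.sqrt_le_sqrt (by nlinarith)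
      _ = 1 - a * c := Real.sqrt_sq hr
  -- monotonicity of f(c) = a c + √D(c)
  have hmono : ∀ c₁ c₂ : ℝ, 0 < c₁ → c₁ ≤ c₂ → c₂ * (1 + s) ≤ 1 →
      a * c₂ + Real.sqrt (c₂ ^ 2 * a ^ 2 - 2 * c₂ + 1)
        ≤ a * c₁ + Real.sqrt (c₁ ^ 2 * a ^ 2 - 2 * c₁ + 1) := by
    intro c₁ c₂ h1 h12 h2
    have hc20 : 0 < c₂ := lt_of_lt_of_le h1 h12
    have hc21 : c₂ ≤ 1 := hc1 c₂ hc20 h2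
    have hD2 : 0 ≤ c₂ ^ 2 * a ^ 2 - 2 * c₂ + 1 := hD c₂ hc20 h2
    set t := Real.sqrt (c₂ ^ 2 * a ^ 2 - 2 * c₂ + 1) with ht
    have ht0 : 0 ≤ t := Real.sqrt_nonneg _
    have ht2 : t ^ 2 = c₂ ^ 2 * a ^ 2 - 2 * c₂ + 1 := Real.sq_sqrt hD2
    have hA : a * t ≤ 1 - a ^ 2 * c₂ := hkey c₂ hc20 hc21
    have hsum : a * (c₂ - c₁) + t ≤ Real.sqrt (c₁ ^ 2 * a ^ 2 - 2 * c₁ + 1) := by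
      have hnn : 0 ≤ a * (c₂ - c₁) + t := by
        have := mul_nonneg ha0 (by linarith : (0:ℝ) ≤ c₂ - c₁); linarith
      calc a * (c₂ - c₁) + t = Real.sqrt ((a * (c₂ - c₁) + t) ^ 2) :=
            (Real.sqrt_sq hnn).symm
        _ ≤ Real.sqrt (c₁ ^ 2 * a ^ 2 - 2 * c₁ + 1) := by
            apply Real.sqrt_le_sqrt
            nlinarith [mul_nonneg (by linarith : (0:ℝ) ≤ c₂ - c₁)
              (by linarith : (0:ℝ) ≤ 1 - a ^ 2 * c₂ - a * t)]
    linarith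
  constructor
  · intro c₁ c₂ lam h1 h12 h2 hlam
    obtain ⟨hl0, hl2⟩ := hlam
    have h2' : c₂ * (1 + s) ≤ 1 := hcs c₂ h2
    have hm := hmono c₁ c₂ h1 h12 h2'
    beta_reduce
    nlinarith [mul_le_mul_of_nonneg_left hm (le_of_lt hl0)]
  · intro c lam₁ lam₂ hc hl1 hl12 hl2
    obtain ⟨hc0, hcub⟩ := hc
    have h2' : c * (1 + s) ≤ 1 := hcs c hcub
    have hcle1 : c ≤ 1 := hc1 c hc0 h2'
    have hf : Real.sqrt (c ^ 2 * a ^ 2 - 2 * c + 1) ≤ 1 - a * c := hkey2 c hc0 hcle1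
    beta_reduce
    nlinarith [mul_nonneg (by linarith : (0:ℝ) ≤ lam₂ - lam₁)
      (by linarith : (0:ℝ) ≤ 1 - a * c - Real.sqrt (c ^ 2 * a ^ 2 - 2 * c + 1))]
end
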